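/- arXiv:2304.04634 — 2 statements merged into one kernel-verified Lean document; each statement's English description precedes it below -/
import Mathlib

section
/- Let 0 < α ≤ β < 1 with α + β = 1, and define b(t,x) = -t^{-α} |x|^{-β} (x/|x|) for 0 < |x| ≤ 1, 0 < t ≤ 1, and b = 0 otherwise. Then for any d/2 < d₀ < d there exist p, q ∈ (1,∞) with d₀/p + 1/q < 1 such that sup over ρ > 0 and parabolic cylinders C of radius ρ of ρ^{1+α} · (normalized L_{p,q}(C)-norm of b) is finite. -/
set_option autoImplicit false
set_option maxHeartbeats 1000000

open MeasureTheory Metric Set ENNReal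
noncomputable section

/-- The normalized mixed `L_{p,q}` norm `⨍‖f‖_{L_{p,q}(C_ρ(t₀,x₀))}` of a vector field
`f` over the parabolic cylinder `C_ρ(t₀,x₀) = [t₀,t₀+ρ²) × B_ρ(x₀)` (spatial norm
inside, temporal norm outside), computed with lower integrals. -/
def avgMixedNorm (d : ℕ) (p q ρ t₀ : ℝ) (x₀ : EuclideanSpace ℝ (Fin d))
    (f : ℝ → EuclideanSpace ℝ (Fin d) → EuclideanSpace ℝ (Fin d)) : ℝ≥0∞ :=
  ((ENNReal.ofReal (ρ ^ 2))⁻¹ *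
    ∫⁻ t in Ico t₀ (t₀ + ρ ^ 2),
      ((volume (ball x₀ ρ))⁻¹ *
        ∫⁻ x in ball x₀ ρ, ENNReal.ofReal ‖f t x‖ ^ p) ^ (q / p)) ^ (1 / q)

open Module

/-- Constant in the shell bound. -/
def shellK {E : Type*} [NormedAddCommGroup E] [NormedSpace ℝ E]
    [MeasurableSpace E] (μ : Measure E) (γ : ℝ) : ℝ≥0∞ :=
  ENNReal.ofReal (2 ^ γ) * (1 - ENNReal.ofReal ((2:ℝ) ^ (γ - (finrank ℝ E : ℝ))))⁻¹ *
    μ (ball 0 1)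


lemma shellK_ne_top {E : Type*} [NormedAddCommGroup E] [NormedSpace ℝ E]
    [MeasurableSpace E] [BorelSpace E] [FiniteDimensional ℝ E] [ProperSpace E]
    (μ : Measure E) [IsFiniteMeasureOnCompacts μ] {γ : ℝ}
    (hγd : γ < (finrank ℝ E : ℝ)) : shellK μ γ ≠ ⊤ := by
  have h1 : (2:ℝ) ^ (γ - (finrank ℝ E : ℝ)) < 1 :=
    Real.rpow_lt_one_of_one_lt_of_neg one_lt_two (by linarith)
  have h2 : (1 - ENNReal.ofReal ((2:ℝ) ^ (γ - (finrank ℝ E : ℝ)))) ≠ 0 := by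
    rw [ne_eq, tsub_eq_zero_iff_le, not_le]
    exact (ENNReal.ofReal_lt_one).2 h1
  apply ENNReal.mul_ne_top
  apply ENNReal.mul_ne_top ENNReal.ofReal_ne_top (ENNReal.inv_ne_top.2 h2)
  exact measure_ball_lt_top.ne


lemma shell_bound {E : Type*} [NormedAddCommGroup E] [NormedSpace ℝ E]
    [MeasurableSpace E] [BorelSpace E] [FiniteDimensional ℝ E]
    (μ : Measure E) [μ.IsAddHaarMeasure]
    {γ : ℝ} (hγ0 : 0 < γ) (hγd : γ < (finrank ℝ E : ℝ)) {r : ℝ} (hr : 0 < r) :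
    ∫⁻ x in ball (0:E) r, ENNReal.ofReal (‖x‖ ^ (-γ)) ∂μ ≤
      ENNReal.ofReal (r ^ ((finrank ℝ E : ℝ) - γ)) * shellK μ γ := by
  set d : ℕ := finrank ℝ E with hd
  set f : E → ℝ≥0∞ := fun x => ENNReal.ofReal (‖x‖ ^ (-γ)) with hf
  set s : ℕ → Set E := fun k => closedBall (0:E) (r * (1/2) ^ k) \ closedBall (0:E) (r * (1/2) ^ (k+1)) with hs
  have hcover : ball (0:E) r ⊆ {0} ∪ ⋃ k, s k := by
    intro x hx
    rcases eq_or_ne x 0 with h0 | h0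
    · exact Or.inl h0
    right
    have hxn : 0 < ‖x‖ := norm_pos_iff.2 h0
    have hxr : ‖x‖ < r := by simpa using mem_ball_iff_norm.1 hx
    have hex : ∃ n : ℕ, r * (1/2:ℝ) ^ n < ‖x‖ := by
      obtain ⟨n, hn⟩ := exists_pow_lt_of_lt_one (div_pos hxn hr) (by norm_num : (1/2:ℝ) < 1)
      exact ⟨n, by rwa [lt_div_iff₀ hr, mul_comm] at hn⟩
    classical
    let n := Nat.find hex
    have hn : r * (1/2:ℝ) ^ n < ‖x‖ := Nat.find_spec hex
    have hn0 : n ≠ 0 := by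
      intro h
      rw [h] at hn; simp at hn; linarith
    obtain ⟨k, hk⟩ : ∃ k, n = k + 1 := ⟨n - 1, (Nat.succ_pred_eq_of_pos (Nat.pos_of_ne_zero hn0)).symm⟩
    have hkk : ¬ (r * (1/2:ℝ) ^ k < ‖x‖) := Nat.find_min hex (by omega)
    refine mem_iUnion.2 ⟨k, ?_, ?_⟩
    · simpa [mem_closedBall, dist_zero_right] using not_lt.1 hkk
    · simp only [mem_closedBall, dist_zero_right, not_le]
      rw [← hk]; exact hn
  calc ∫⁻ x in ball (0:E) r, f x ∂μ
      ≤ ∫⁻ x in {0} ∪ ⋃ k, s k, f x ∂μ := lintegral_mono_set hcover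
    _ ≤ ∫⁻ x in ({0}:Set E), f x ∂μ + ∫⁻ x in ⋃ k, s k, f x ∂μ := lintegral_union_le _ _ _
    _ ≤ 0 + ∑' k, ∫⁻ x in s k, f x ∂μ := by
        have h0 : ∫⁻ x in ({0}:Set E), f x ∂μ = 0 := by
          have : ∫⁻ x in ({0}:Set E), f x ∂μ = ∫⁻ x in ({0}:Set E), 0 ∂μ := by
            apply setLIntegral_congr_fun (measurableSet_singleton 0)
            intro x hx
            simp only [mem_singleton_iff] at hx
            simp [hf, hx, Real.zero_rpow (neg_ne_zero.2 hγ0.ne')]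
          simpa using this
        exact add_le_add h0.le (lintegral_iUnion_le _ _)
    _ = ∑' k, ∫⁻ x in s k, f x ∂μ := by rw [zero_add]
    _ ≤ ∑' k, ENNReal.ofReal ((r * (1/2) ^ (k+1)) ^ (-γ)) * (ENNReal.ofReal ((r * (1/2) ^ k) ^ d) * μ (ball 0 1)) := by
        apply ENNReal.tsum_le_tsum
        intro k
        have hb : ∫⁻ x in s k, f x ∂μ ≤ ∫⁻ x in s k, ENNReal.ofReal ((r * (1/2) ^ (k+1)) ^ (-γ)) ∂μ := by
          apply setLIntegral_mono measurable_const
          intro x hx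
          obtain ⟨hx1, hx2⟩ := hx
          simp only [mem_closedBall, dist_zero_right, not_le] at hx1 hx2
          exact ENNReal.ofReal_le_ofReal
            (Real.rpow_le_rpow_of_nonpos (by positivity) hx2.le (neg_nonpos.2 hγ0.le))
        refine hb.trans ?_
        rw [setLIntegral_const]
        gcongr
        calc μ (s k) ≤ μ (closedBall (0:E) (r * (1/2) ^ k)) := measure_mono diff_subset
          _ = ENNReal.ofReal ((r * (1/2) ^ k) ^ d) * μ (ball 0 1) :=
              Measure.addHaar_closedBall μ 0 (by positivity)
    _ ≤ ∑' k, ENNReal.ofReal (r ^ ((d:ℝ) - γ)) * (ENNReal.ofReal (2 ^ γ) *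
          (ENNReal.ofReal ((2:ℝ) ^ (γ - (d:ℝ))) ^ k * μ (ball 0 1))) := by
        apply ENNReal.tsum_le_tsum
        intro k
        have hkey : (r * (1/2:ℝ) ^ (k+1)) ^ (-γ) * (r * (1/2:ℝ) ^ k) ^ d
            = r ^ ((d:ℝ) - γ) * (2 ^ γ * ((2:ℝ) ^ (γ - (d:ℝ))) ^ k) := by
          have h12 : ((1:ℝ)/2) = 2⁻¹ := by norm_num
          have h2 : (0:ℝ) < 2 := by norm_num
          rw [h12, ← Real.rpow_natCast (r * 2⁻¹ ^ k) d,
            Real.mul_rpow hr.le (by positivity), Real.mul_rpow hr.le (by positivity),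
            ← Real.rpow_natCast ((2:ℝ)⁻¹) (k+1), ← Real.rpow_natCast ((2:ℝ)⁻¹) k,
            ← Real.rpow_mul (by norm_num : (0:ℝ) ≤ 2⁻¹), ← Real.rpow_mul (by norm_num : (0:ℝ) ≤ 2⁻¹),
            Real.inv_rpow h2.le, Real.inv_rpow h2.le, ← Real.rpow_neg h2.le, ← Real.rpow_neg h2.le,
            ← Real.rpow_natCast ((2:ℝ) ^ (γ - (d:ℝ))) k, ← Real.rpow_mul h2.le]
          rw [mul_mul_mul_comm, ← Real.rpow_add hr, ← Real.rpow_add h2]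
          push_cast
          ring_nf
          rw [mul_assoc, ← Real.rpow_add h2]; congr 2; ring
        calc ENNReal.ofReal ((r * (1/2) ^ (k+1)) ^ (-γ)) * (ENNReal.ofReal ((r * (1/2) ^ k) ^ d) * μ (ball 0 1))
            = ENNReal.ofReal ((r * (1/2) ^ (k+1)) ^ (-γ) * (r * (1/2) ^ k) ^ d) * μ (ball 0 1) := by
              rw [ENNReal.ofReal_mul (by positivity), mul_assoc]
          _ = ENNReal.ofReal (r ^ ((d:ℝ) - γ) * (2 ^ γ * ((2:ℝ) ^ (γ - (d:ℝ))) ^ k)) * μ (ball 0 1) := by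
              rw [hkey]
          _ ≤ ENNReal.ofReal (r ^ ((d:ℝ) - γ)) * (ENNReal.ofReal (2 ^ γ) *
                (ENNReal.ofReal ((2:ℝ) ^ (γ - (d:ℝ))) ^ k * μ (ball 0 1))) := by
              rw [ENNReal.ofReal_mul (by positivity), ENNReal.ofReal_mul (by positivity),
                ENNReal.ofReal_pow (by positivity)]
              ring_nf
              exact le_refl _
    _ = ENNReal.ofReal (r ^ ((d:ℝ) - γ)) * shellK μ γ := by
        rw [ENNReal.tsum_mul_left, ENNReal.tsum_mul_left]
        rw [shellK, ← ENNReal.tsum_geometric]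
        rw [ENNReal.tsum_mul_right]
        ring

lemma time_bound {γ : ℝ} (hγ0 : 0 < γ) (hγ1 : γ < 1) {ρ : ℝ} (hρ : 0 < ρ) (t₀ : ℝ) :
    ∫⁻ t in Ico t₀ (t₀ + ρ^2), (Ioc (0:ℝ) 1).indicator (fun t => ENNReal.ofReal (t ^ (-γ))) t ≤
      ENNReal.ofReal ((min (ρ^2) 1) ^ (1 - γ)) *
        (ENNReal.ofReal 2 * shellK (volume : Measure ℝ) γ + 1) := by
  set m : ℝ := min (ρ^2) 1 with hm
  have hm0 : 0 < m := lt_min (by positivity) one_pos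
  set A : Set ℝ := Ioc (0:ℝ) 1 ∩ Ico t₀ (t₀ + ρ^2) with hA
  have hstep : ∫⁻ t in Ico t₀ (t₀ + ρ^2),
      (Ioc (0:ℝ) 1).indicator (fun t => ENNReal.ofReal (t ^ (-γ))) t
      = ∫⁻ t in A, ENNReal.ofReal (t ^ (-γ)) := by
    rw [lintegral_indicator measurableSet_Ioc, Measure.restrict_restrict measurableSet_Ioc]
  rw [hstep]
  have hAsub : A ⊆ Ioc 0 m ∪ (A \ Ioc 0 m) := fun x hx => by
    by_cases h : x ∈ Ioc 0 m
    · exact Or.inl h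
    · exact Or.inr ⟨hx, h⟩
  have hvolA : volume A ≤ ENNReal.ofReal m := by
    rcases le_total (ρ^2) 1 with h | h
    · have hmm : m = ρ^2 := min_eq_left h
      rw [hmm]
      calc volume A ≤ volume (Ico t₀ (t₀ + ρ^2)) := measure_mono inter_subset_right
        _ = ENNReal.ofReal (ρ^2) := by rw [Real.volume_Ico, add_sub_cancel_left]
    · have hmm : m = 1 := min_eq_right h
      rw [hmm]
      calc volume A ≤ volume (Ioc (0:ℝ) 1) := measure_mono inter_subset_left
        _ = ENNReal.ofReal 1 := by simp
  have part1 : (∫⁻ t in Ioc 0 m, ENNReal.ofReal (t ^ (-γ)))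
      ≤ ENNReal.ofReal (m ^ (1-γ)) * (ENNReal.ofReal 2 * shellK (volume : Measure ℝ) γ) := by
    have e1 : ∫⁻ t in Ioc 0 m, ENNReal.ofReal (t ^ (-γ))
        = ∫⁻ t in Ioc 0 m, ENNReal.ofReal (‖t‖ ^ (-γ)) := by
      apply setLIntegral_congr_fun measurableSet_Ioc
      intro t ht
      simp only
      rw [Real.norm_of_nonneg ht.1.le]
    rw [e1]
    have e2 : Ioc 0 m ⊆ ball (0:ℝ) (2*m) := by
      intro t ht
      simp only [mem_ball, dist_zero_right, Real.norm_eq_abs]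
      rw [abs_of_pos ht.1]; linarith [ht.2]
    refine (lintegral_mono_set e2).trans ?_
    have hsb := shell_bound (volume : Measure ℝ) hγ0
      (by simpa using hγ1) (r := 2*m) (by positivity)
    rw [finrank_self, Nat.cast_one] at hsb
    refine hsb.trans ?_
    have hle : ENNReal.ofReal ((2*m) ^ ((1:ℝ)-γ))
        ≤ ENNReal.ofReal (m ^ (1-γ)) * ENNReal.ofReal 2 := by
      rw [← ENNReal.ofReal_mul (Real.rpow_nonneg hm0.le _)]
      apply ENNReal.ofReal_le_ofReal
      rw [Real.mul_rpow (by norm_num) hm0.le]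
      have h2e : (2:ℝ) ^ ((1:ℝ) - γ) ≤ 2 := by
        calc (2:ℝ)^((1:ℝ)-γ) ≤ 2^(1:ℝ) :=
              Real.rpow_le_rpow_of_exponent_le one_le_two (by linarith)
          _ = 2 := Real.rpow_one 2
      nlinarith [Real.rpow_nonneg hm0.le ((1:ℝ)-γ)]
    calc ENNReal.ofReal ((2*m) ^ ((1:ℝ)-γ)) * shellK (volume : Measure ℝ) γ
        ≤ ENNReal.ofReal (m ^ (1-γ)) * ENNReal.ofReal 2 * shellK (volume : Measure ℝ) γ :=
          mul_le_mul_left hle _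
      _ = ENNReal.ofReal (m ^ (1-γ)) * (ENNReal.ofReal 2 * shellK (volume : Measure ℝ) γ) := by
          rw [mul_assoc]
  have part2 : (∫⁻ t in A \ Ioc 0 m, ENNReal.ofReal (t ^ (-γ)))
      ≤ ENNReal.ofReal (m ^ (1-γ)) * 1 := by
    calc ∫⁻ t in A \ Ioc 0 m, ENNReal.ofReal (t ^ (-γ))
        ≤ ∫⁻ _t in A \ Ioc 0 m, ENNReal.ofReal (m ^ (-γ)) := by
          apply setLIntegral_mono measurable_const
          intro t ht
          obtain ⟨htA, htn⟩ := ht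
          have ht0 : 0 < t := htA.1.1
          have htm : m < t := by
            by_contra h
            exact htn ⟨ht0, not_lt.1 h⟩
          exact ENNReal.ofReal_le_ofReal
            (Real.rpow_le_rpow_of_nonpos hm0 htm.le (neg_nonpos.2 hγ0.le))
      _ = ENNReal.ofReal (m ^ (-γ)) * volume (A \ Ioc 0 m) := setLIntegral_const _ _
      _ ≤ ENNReal.ofReal (m ^ (-γ)) * ENNReal.ofReal m :=
          mul_le_mul_right ((measure_mono diff_subset).trans hvolA) _
      _ = ENNReal.ofReal (m ^ (1-γ)) * 1 := by
          rw [mul_one, ← ENNReal.ofReal_mul (Real.rpow_nonneg hm0.le _)]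
          congr 1
          rw [show (1:ℝ)-γ = 1 + -γ by ring, Real.rpow_add hm0, Real.rpow_one]
          ring
  calc ∫⁻ t in A, ENNReal.ofReal (t ^ (-γ))
      ≤ ∫⁻ t in Ioc 0 m ∪ (A \ Ioc 0 m), ENNReal.ofReal (t ^ (-γ)) := lintegral_mono_set hAsub
    _ ≤ (∫⁻ t in Ioc 0 m, ENNReal.ofReal (t ^ (-γ)))
        + ∫⁻ t in A \ Ioc 0 m, ENNReal.ofReal (t ^ (-γ)) := lintegral_union_le _ _ _
    _ ≤ ENNReal.ofReal (m ^ (1-γ)) * (ENNReal.ofReal 2 * shellK (volume : Measure ℝ) γ)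
        + ENNReal.ofReal (m ^ (1-γ)) * 1 := add_le_add part1 part2
    _ = ENNReal.ofReal (m ^ (1-γ)) * (ENNReal.ofReal 2 * shellK (volume : Measure ℝ) γ + 1) := by
        ring

lemma space_bound (d : ℕ) (hd : 1 ≤ d) {γ : ℝ} (hγ0 : 0 < γ) (hγd : γ < (d:ℝ)) {ρ : ℝ} (hρ : 0 < ρ)
    (x₀ : EuclideanSpace ℝ (Fin d)) :
    ∫⁻ x in ball x₀ ρ, (closedBall (0:EuclideanSpace ℝ (Fin d)) 1).indicator
        (fun x => ENNReal.ofReal (‖x‖ ^ (-γ))) x ≤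
      ENNReal.ofReal ((min ρ 1) ^ ((d:ℝ) - γ)) *
        (shellK (volume : Measure (EuclideanSpace ℝ (Fin d))) γ
          + volume (ball (0:EuclideanSpace ℝ (Fin d)) 1)) := by
  haveI : Nontrivial (EuclideanSpace ℝ (Fin d)) := by
    have h0 : 0 < finrank ℝ (EuclideanSpace ℝ (Fin d)) := by
      rw [finrank_euclideanSpace_fin]; omega
    exact Module.nontrivial_of_finrank_pos h0
  have hfr : finrank ℝ (EuclideanSpace ℝ (Fin d)) = d := finrank_euclideanSpace_fin
  set r : ℝ := min ρ 1 with hr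
  have hr0 : 0 < r := lt_min hρ one_pos
  set f : EuclideanSpace ℝ (Fin d) → ℝ≥0∞ := (closedBall (0:EuclideanSpace ℝ (Fin d)) 1).indicator (fun x => ENNReal.ofReal (‖x‖ ^ (-γ)))
    with hf
  have hsub : ball x₀ ρ ⊆ ball (0:EuclideanSpace ℝ (Fin d)) r ∪ (ball x₀ ρ \ ball (0:EuclideanSpace ℝ (Fin d)) r) := fun x hx => by
    by_cases h : x ∈ ball (0:EuclideanSpace ℝ (Fin d)) r
    · exact Or.inl h
    · exact Or.inr ⟨hx, h⟩
  have part1 : ∫⁻ x in ball (0:EuclideanSpace ℝ (Fin d)) r, f x ≤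
      ENNReal.ofReal (r ^ ((d:ℝ) - γ)) * shellK (volume : Measure (EuclideanSpace ℝ (Fin d))) γ := by
    refine (lintegral_mono (g := fun x => ENNReal.ofReal (‖x‖ ^ (-γ)))
      fun x => Set.indicator_le_self _ _ x).trans ?_
    have hsb := shell_bound (volume : Measure (EuclideanSpace ℝ (Fin d))) hγ0 (by rw [hfr]; exact hγd) hr0
    rwa [hfr] at hsb
  have part2 : ∫⁻ x in ball x₀ ρ \ ball (0:EuclideanSpace ℝ (Fin d)) r, f x ≤
      ENNReal.ofReal (r ^ ((d:ℝ) - γ)) * volume (ball (0:EuclideanSpace ℝ (Fin d)) 1) := by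
    have hpt : ∀ x ∈ ball x₀ ρ \ ball (0:EuclideanSpace ℝ (Fin d)) r,
        f x ≤ (closedBall (0:EuclideanSpace ℝ (Fin d)) 1).indicator (fun _ => ENNReal.ofReal (r ^ (-γ))) x := by
      intro x hx
      by_cases hx1 : x ∈ closedBall (0:EuclideanSpace ℝ (Fin d)) 1
      · rw [hf, Set.indicator_of_mem hx1, Set.indicator_of_mem hx1]
        have hxr : r ≤ ‖x‖ := by
          have := hx.2
          simpa [mem_ball, dist_zero_right, not_lt] using this
        exact ENNReal.ofReal_le_ofReal
          (Real.rpow_le_rpow_of_nonpos hr0 hxr (neg_nonpos.2 hγ0.le))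
      · rw [hf, Set.indicator_of_notMem hx1, Set.indicator_of_notMem hx1]
    refine (setLIntegral_mono (measurable_const.indicator measurableSet_closedBall) hpt).trans ?_
    rw [lintegral_indicator measurableSet_closedBall,
      Measure.restrict_restrict measurableSet_closedBall, setLIntegral_const]
    have hvol : volume (closedBall (0:EuclideanSpace ℝ (Fin d)) 1 ∩ (ball x₀ ρ \ ball (0:EuclideanSpace ℝ (Fin d)) r)) ≤
        ENNReal.ofReal (r ^ d) * volume (ball (0:EuclideanSpace ℝ (Fin d)) 1) := by
      rcases le_total ρ 1 with h | h
      · have hrρ : r = ρ := min_eq_left h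
        rw [hrρ]
        calc volume (closedBall (0:EuclideanSpace ℝ (Fin d)) 1 ∩ (ball x₀ ρ \ ball (0:EuclideanSpace ℝ (Fin d)) ρ))
            ≤ volume (ball x₀ ρ) := measure_mono fun x hx => hx.2.1
          _ = ENNReal.ofReal (ρ ^ d) * volume (ball (0:EuclideanSpace ℝ (Fin d)) 1) := by
              rw [Measure.addHaar_ball volume x₀ hρ.le, hfr]
      · have hrρ : r = 1 := min_eq_right h
        rw [hrρ]
        calc volume (closedBall (0:EuclideanSpace ℝ (Fin d)) 1 ∩ (ball x₀ ρ \ ball (0:EuclideanSpace ℝ (Fin d)) 1))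
            ≤ volume (closedBall (0:EuclideanSpace ℝ (Fin d)) 1) := measure_mono inter_subset_left
          _ = ENNReal.ofReal ((1:ℝ) ^ d) * volume (ball (0:EuclideanSpace ℝ (Fin d)) 1) := by
              rw [Measure.addHaar_closedBall volume 0 zero_le_one, hfr]
    refine (mul_le_mul_right hvol _).trans ?_
    rw [← mul_assoc, ← ENNReal.ofReal_mul (Real.rpow_nonneg hr0.le _)]
    apply mul_le_mul_left
    apply ENNReal.ofReal_le_ofReal
    rw [← Real.rpow_natCast r d, ← Real.rpow_add hr0]
    rw [show -γ + (d:ℝ) = (d:ℝ) - γ by ring]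
  calc ∫⁻ x in ball x₀ ρ, f x
      ≤ ∫⁻ x in ball (0:EuclideanSpace ℝ (Fin d)) r ∪ (ball x₀ ρ \ ball (0:EuclideanSpace ℝ (Fin d)) r), f x := lintegral_mono_set hsub
    _ ≤ (∫⁻ x in ball (0:EuclideanSpace ℝ (Fin d)) r, f x) + ∫⁻ x in ball x₀ ρ \ ball (0:EuclideanSpace ℝ (Fin d)) r, f x :=
        lintegral_union_le _ _ _
    _ ≤ ENNReal.ofReal (r ^ ((d:ℝ) - γ)) * shellK (volume : Measure (EuclideanSpace ℝ (Fin d))) γ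
        + ENNReal.ofReal (r ^ ((d:ℝ) - γ)) * volume (ball (0:EuclideanSpace ℝ (Fin d)) 1) := add_le_add part1 part2
    _ = _ := (mul_add _ _ _).symm

-- cancellation helper
lemma ofReal_rpow_cancel {x : ℝ} (hx : 0 < x) (a b : ℝ) :
    ENNReal.ofReal (x ^ (a + b)) * (ENNReal.ofReal (x ^ b))⁻¹ = ENNReal.ofReal (x ^ a) := by
  rw [Real.rpow_add hx, ENNReal.ofReal_mul (Real.rpow_nonneg hx.le _), mul_assoc,
    ENNReal.mul_inv_cancel (by positivity) ENNReal.ofReal_ne_top, mul_one]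

/-- for `0 < α ≤ β < 1` with `α + β = 1` and
`b(t,x) = -t^{-α}|x|^{-β} x/|x|` for `0 < |x| ≤ 1`, `0 < t ≤ 1` (and `0` otherwise),
for any `d/2 < d₀ < d` there exist `p, q ∈ (1,∞)` with `d₀/p + 1/q < 1` such that
`sup_{ρ>0, C ∈ ℂ_ρ} ρ^{1+α} ⨍‖b‖_{L_{p,q}(C)}` is finite. -/
theorem stmt5 (d : ℕ) (hd : 1 ≤ d) (α β : ℝ) (hα : 0 < α) (hαβ : α ≤ β) (hβ : β < 1)
    (hsum : α + β = 1) (d₀ : ℝ) (hd₀1 : (d : ℝ) / 2 < d₀) (hd₀2 : d₀ < d)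
    (b : ℝ → EuclideanSpace ℝ (Fin d) → EuclideanSpace ℝ (Fin d))
    (hbdef : ∀ t x, b t x =
      if 0 < t ∧ t ≤ 1 ∧ 0 < ‖x‖ ∧ ‖x‖ ≤ 1 then (-(t ^ (-α) * ‖x‖ ^ (-β - 1))) • x
      else 0) :
    ∃ p q : ℝ, 1 < p ∧ 1 < q ∧ d₀ / p + 1 / q < 1 ∧
      ∃ M : ℝ≥0∞, M ≠ ⊤ ∧
        ∀ ρ : ℝ, 0 < ρ → ∀ t₀ : ℝ, ∀ x₀ : EuclideanSpace ℝ (Fin d),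
          ENNReal.ofReal (ρ ^ (1 + α)) * avgMixedNorm d p q ρ t₀ x₀ b ≤ M := by
  have hd' : (1:ℝ) ≤ d := by exact_mod_cast hd
  have hdpos : (0:ℝ) < d := by linarith
  have hβ0 : 0 < β := lt_of_lt_of_le hα hαβ
  have hd₀0 : 0 < d₀ := lt_trans (by linarith) hd₀1
  obtain ⟨θ, hθ⟩ : ∃ θ:ℝ, θ = α + β * (d₀ / d) := ⟨_, rfl⟩
  have hθ1 : θ < 1 := by
    have h1 : d₀ / d < 1 := (div_lt_one hdpos).2 hd₀2
    have h2 : β * (d₀ / ↑d) < β * 1 := mul_lt_mul_of_pos_left h1 hβ0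
    rw [hθ]; linarith
  have hθα : α < θ := by
    have h2 : 0 < β * (d₀ / ↑d) := by positivity
    rw [hθ]; linarith
  have hβ1' : β < 1 := hβ
  obtain ⟨s, hsθ, hsβ, hs1⟩ : ∃ s : ℝ, θ < s ∧ β < s ∧ s < 1 := by
    refine ⟨(max θ β + 1) / 2, ?_, ?_, ?_⟩
    · have h2 : θ ≤ max θ β := le_max_left _ _
      have h3 : max θ β < 1 := max_lt hθ1 hβ
      linarith
    · have h2 : β ≤ max θ β := le_max_right _ _
      have h3 : max θ β < 1 := max_lt hθ1 hβ
      linarith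
    · have h3 : max θ β < 1 := max_lt hθ1 hβ
      linarith
  have hsα : α < s := lt_trans hθα hsθ
  have hs0 : 0 < s := lt_trans hα hsα
  obtain ⟨p, hp⟩ : ∃ p:ℝ, p = s * d / β := ⟨_, rfl⟩
  obtain ⟨q, hq⟩ : ∃ q:ℝ, q = s / α := ⟨_, rfl⟩
  have hp0 : 0 < p := by rw [hp]; exact div_pos (mul_pos hs0 hdpos) hβ0
  have hq0 : 0 < q := by rw [hq]; exact div_pos hs0 hα
  have hp1 : 1 < p := by
    rw [hp, lt_div_iff₀ hβ0, one_mul]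
    nlinarith
  have hq1 : 1 < q := by
    rw [hq, lt_div_iff₀ hα, one_mul]; linarith
  have hβp : β * p = s * d := by rw [hp, mul_div_assoc', mul_div_cancel_left₀ _ hβ0.ne']
  have hαq : α * q = s := by rw [hq, mul_div_assoc', mul_div_cancel_left₀ _ hα.ne']
  have hcond : d₀ / p + 1 / q < 1 := by
    have e1 : d₀ / p = d₀ * β / (s * d) := by
      rw [hp]; field_simp
    have e2 : (1:ℝ) / q = α / s := by
      rw [hq]; field_simp
    rw [e1, e2]
    rw [div_add_div _ _ ((mul_pos hs0 hdpos).ne' : (s*d) ≠ 0) (hs0.ne' : s ≠ 0)]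
    rw [div_lt_one (mul_pos (mul_pos hs0 hdpos) hs0)]
    have hθs : α + β * (d₀ / ↑d) < s := by rw [hθ] at hsθ; exact hsθ
    have key : (α + β * (d₀ / ↑d)) * (s * ↑d) < s * (s * ↑d) :=
      mul_lt_mul_of_pos_right hθs (by positivity)
    have e3 : (α + β * (d₀ / ↑d)) * (s * ↑d) = α * s * ↑d + β * d₀ * s := by
      field_simp
    rw [e3] at key
    nlinarith [key]
  refine ⟨p, q, hp1, hq1, hcond, ?_⟩
  -- constants
  set v₁ : ℝ≥0∞ := volume (ball (0:EuclideanSpace ℝ (Fin d)) 1) with hv₁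
  have hv₁0 : v₁ ≠ 0 := (measure_ball_pos volume 0 one_pos).ne'
  have hv₁top : v₁ ≠ ⊤ := measure_ball_lt_top.ne
  set K₄ : ℝ≥0∞ := (shellK (volume : Measure (EuclideanSpace ℝ (Fin d))) (β*p) + v₁) * v₁⁻¹
    with hK₄
  set KT : ℝ≥0∞ := ENNReal.ofReal 2 * shellK (volume : Measure ℝ) (α*q) + 1 with hKT
  haveI : Nontrivial (EuclideanSpace ℝ (Fin d)) := by
    have h0 : 0 < finrank ℝ (EuclideanSpace ℝ (Fin d)) := by
      rw [finrank_euclideanSpace_fin]; omega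
    exact Module.nontrivial_of_finrank_pos h0
  have hβpd : β * p < (d:ℝ) := by rw [hβp]; nlinarith
  have hβp0 : 0 < β * p := by positivity
  have hαq0 : 0 < α * q := by positivity
  have hαq1 : α * q < 1 := by rw [hαq]; exact hs1
  have hK₄top : K₄ ≠ ⊤ := by
    apply ENNReal.mul_ne_top
    · exact ENNReal.add_ne_top.2 ⟨shellK_ne_top volume (by rw [finrank_euclideanSpace_fin]; exact hβpd), hv₁top⟩
    · exact ENNReal.inv_ne_top.2 hv₁0
  have hKTtop : KT ≠ ⊤ := by
    apply ENNReal.add_ne_top.2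
    constructor
    · exact ENNReal.mul_ne_top ENNReal.ofReal_ne_top
        (shellK_ne_top volume (by rw [finrank_self, Nat.cast_one]; exact hαq1))
    · exact one_ne_top
  refine ⟨K₄ ^ (1/p) * KT ^ (1/q), ?_, ?_⟩
  · exact ENNReal.mul_ne_top (ENNReal.rpow_ne_top_of_nonneg (by positivity) hK₄top)
      (ENNReal.rpow_ne_top_of_nonneg (by positivity) hKTtop)
  intro ρ hρ t₀ x₀
  set gT : ℝ → ℝ≥0∞ :=
    fun t => (Ioc (0:ℝ) 1).indicator (fun t => ENNReal.ofReal (t ^ (-(α*p)))) t with hgT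
  set hX : EuclideanSpace ℝ (Fin d) → ℝ≥0∞ :=
    (closedBall (0:EuclideanSpace ℝ (Fin d)) 1).indicator
      (fun x => ENNReal.ofReal (‖x‖ ^ (-(β*p)))) with hhX
  have hgTtop : ∀ t, gT t ≠ ⊤ := by
    intro t
    by_cases h : t ∈ Ioc (0:ℝ) 1 <;> simp [hgT, h]
  -- Step A
  have stepA : ∀ t x, (ENNReal.ofReal ‖b t x‖) ^ p ≤ gT t * hX x := by
    intro t x
    rw [hbdef t x]
    split_ifs with hc
    · obtain ⟨ht0, ht1, hx0, hx1⟩ := hc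
      have hnorm : ‖(-(t ^ (-α) * ‖x‖ ^ (-β - 1))) • x‖ = t ^ (-α) * ‖x‖ ^ (-β) := by
        rw [norm_smul, Real.norm_eq_abs, abs_neg, abs_of_pos (by positivity)]
        rw [show (-β - 1 : ℝ) = -β + (-1) by ring, Real.rpow_add hx0, Real.rpow_neg_one]
        field_simp
      rw [hnorm]
      have hmem_t : t ∈ Ioc (0:ℝ) 1 := ⟨ht0, ht1⟩
      have hmem_x : x ∈ closedBall (0:EuclideanSpace ℝ (Fin d)) 1 := by
        simpa [mem_closedBall, dist_zero_right] using hx1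
      rw [hgT]
      simp only [Set.indicator_of_mem hmem_t]
      rw [hhX]
      simp only [Set.indicator_of_mem hmem_x]
      apply le_of_eq
      rw [ENNReal.ofReal_rpow_of_pos (by positivity)]
      rw [Real.mul_rpow (by positivity) (by positivity)]
      rw [← Real.rpow_mul ht0.le, ← Real.rpow_mul hx0.le]
      rw [ENNReal.ofReal_mul (by positivity)]
      ring_nf
    · simp only [norm_zero, ENNReal.ofReal_zero]
      rw [ENNReal.zero_rpow_of_pos hp0]
      exact bot_le
  -- Step B+C : inner expression bound
  set Cρ : ℝ≥0∞ := ENNReal.ofReal (ρ ^ (-(β*p))) * K₄ with hCρ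
  have hCρtop : Cρ ≠ ⊤ := ENNReal.mul_ne_top ENNReal.ofReal_ne_top hK₄top
  have stepC : ∀ t, (volume (ball x₀ ρ))⁻¹ *
      (∫⁻ x in ball x₀ ρ, ENNReal.ofReal ‖b t x‖ ^ p) ≤ gT t * Cρ := by
    intro t
    have hB : (∫⁻ x in ball x₀ ρ, ENNReal.ofReal ‖b t x‖ ^ p) ≤
        gT t * (ENNReal.ofReal ((min ρ 1) ^ ((d:ℝ) - β*p)) *
          (shellK (volume : Measure (EuclideanSpace ℝ (Fin d))) (β*p) + v₁)) := by
      calc (∫⁻ x in ball x₀ ρ, ENNReal.ofReal ‖b t x‖ ^ p)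
          ≤ ∫⁻ x in ball x₀ ρ, gT t * hX x := lintegral_mono fun x => stepA t x
        _ = gT t * ∫⁻ x in ball x₀ ρ, hX x := lintegral_const_mul' _ _ (hgTtop t)
        _ ≤ _ := mul_le_mul_right (space_bound d hd hβp0 hβpd hρ x₀) _
    have hV : volume (ball x₀ ρ) = ENNReal.ofReal (ρ ^ d) * v₁ := by
      rw [hv₁, Measure.addHaar_ball volume x₀ hρ.le, finrank_euclideanSpace_fin]
    calc (volume (ball x₀ ρ))⁻¹ * (∫⁻ x in ball x₀ ρ, ENNReal.ofReal ‖b t x‖ ^ p)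
        ≤ (volume (ball x₀ ρ))⁻¹ *
          (gT t * (ENNReal.ofReal ((min ρ 1) ^ ((d:ℝ) - β*p)) *
            (shellK (volume : Measure (EuclideanSpace ℝ (Fin d))) (β*p) + v₁))) :=
          mul_le_mul_right hB _
      _ ≤ (volume (ball x₀ ρ))⁻¹ *
          (gT t * (ENNReal.ofReal (ρ ^ ((d:ℝ) - β*p)) *
            (shellK (volume : Measure (EuclideanSpace ℝ (Fin d))) (β*p) + v₁))) := by
          apply mul_le_mul_right
          apply mul_le_mul_right
          apply mul_le_mul_left
          apply ENNReal.ofReal_le_ofReal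
          have hexp : 0 ≤ (d:ℝ) - β*p := by rw [hβp]; nlinarith
          exact Real.rpow_le_rpow (le_min hρ.le zero_le_one) (min_le_left _ _) hexp
      _ = gT t * (ENNReal.ofReal (ρ ^ ((d:ℝ) - β*p)) * (ENNReal.ofReal (ρ ^ (d:ℝ)))⁻¹ *
            ((shellK (volume : Measure (EuclideanSpace ℝ (Fin d))) (β*p) + v₁) * v₁⁻¹)) := by
          rw [hV, ← Real.rpow_natCast ρ d]
          rw [ENNReal.mul_inv (Or.inl (by positivity)) (Or.inl ENNReal.ofReal_ne_top)]
          ring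
      _ = gT t * Cρ := by
          rw [hCρ, hK₄]
          congr 2
          rw [show (d:ℝ) - β*p = -(β*p) + (d:ℝ) by ring]
          exact ofReal_rpow_cancel hρ _ _
  -- Step D
  set gq : ℝ → ℝ≥0∞ :=
    fun t => (Ioc (0:ℝ) 1).indicator (fun t => ENNReal.ofReal (t ^ (-(α*q)))) t with hgq
  have stepD : ∀ t, ((volume (ball x₀ ρ))⁻¹ *
      (∫⁻ x in ball x₀ ρ, ENNReal.ofReal ‖b t x‖ ^ p)) ^ (q/p) ≤ Cρ ^ (q/p) * gq t := by
    intro t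
    have h1 : ((volume (ball x₀ ρ))⁻¹ *
        (∫⁻ x in ball x₀ ρ, ENNReal.ofReal ‖b t x‖ ^ p)) ^ (q/p) ≤ (gT t * Cρ) ^ (q/p) :=
      ENNReal.rpow_le_rpow (stepC t) (by positivity)
    refine h1.trans ?_
    rw [ENNReal.mul_rpow_of_nonneg _ _ (by positivity)]
    rw [mul_comm]
    apply mul_le_mul_right
    apply le_of_eq
    by_cases ht : t ∈ Ioc (0:ℝ) 1
    · rw [hgT, hgq]
      simp only [Set.indicator_of_mem ht]
      rw [ENNReal.ofReal_rpow_of_pos (Real.rpow_pos_of_pos ht.1 _)]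
      congr 1
      rw [← Real.rpow_mul ht.1.le]
      congr 1
      field_simp
    · rw [hgT, hgq]
      simp only [Set.indicator_of_notMem ht]
      exact ENNReal.zero_rpow_of_pos (by positivity)
  -- Step E : time integral
  set m : ℝ := min (ρ^2) 1 with hm
  have hm0 : 0 < m := lt_min (by positivity) one_pos
  have stepE : (∫⁻ t in Ico t₀ (t₀ + ρ^2),
      ((volume (ball x₀ ρ))⁻¹ * (∫⁻ x in ball x₀ ρ, ENNReal.ofReal ‖b t x‖ ^ p)) ^ (q/p)) ≤
      Cρ ^ (q/p) * (ENNReal.ofReal (m ^ (1 - α*q)) * KT) := by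
    calc (∫⁻ t in Ico t₀ (t₀ + ρ^2),
        ((volume (ball x₀ ρ))⁻¹ * (∫⁻ x in ball x₀ ρ, ENNReal.ofReal ‖b t x‖ ^ p)) ^ (q/p))
        ≤ ∫⁻ t in Ico t₀ (t₀ + ρ^2), Cρ ^ (q/p) * gq t := lintegral_mono fun t => stepD t
      _ = Cρ ^ (q/p) * ∫⁻ t in Ico t₀ (t₀ + ρ^2), gq t :=
          lintegral_const_mul' _ _ (ENNReal.rpow_ne_top_of_nonneg (by positivity) hCρtop)
      _ ≤ Cρ ^ (q/p) * (ENNReal.ofReal (m ^ (1 - α*q)) * KT) := by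
          apply mul_le_mul_right
          exact time_bound hαq0 hαq1 hρ t₀
  -- final assembly
  have hfinal : avgMixedNorm d p q ρ t₀ x₀ b ≤
      ENNReal.ofReal (ρ ^ (-(2*α))) * ENNReal.ofReal (ρ ^ (-β)) * (K₄ ^ (1/p) * KT ^ (1/q)) := by
    rw [avgMixedNorm]
    have h1 : (ENNReal.ofReal (ρ ^ 2))⁻¹ *
        (∫⁻ t in Ico t₀ (t₀ + ρ^2),
          ((volume (ball x₀ ρ))⁻¹ * (∫⁻ x in ball x₀ ρ, ENNReal.ofReal ‖b t x‖ ^ p)) ^ (q/p)) ≤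
        ENNReal.ofReal ((ρ^2 : ℝ) ^ (-(α*q))) * (Cρ ^ (q/p) * KT) := by
      calc (ENNReal.ofReal (ρ ^ 2))⁻¹ *
          (∫⁻ t in Ico t₀ (t₀ + ρ^2),
            ((volume (ball x₀ ρ))⁻¹ * (∫⁻ x in ball x₀ ρ, ENNReal.ofReal ‖b t x‖ ^ p)) ^ (q/p))
          ≤ (ENNReal.ofReal (ρ ^ 2))⁻¹ * (Cρ ^ (q/p) * (ENNReal.ofReal (m ^ (1 - α*q)) * KT)) :=
            mul_le_mul_right stepE _
        _ ≤ (ENNReal.ofReal (ρ ^ 2))⁻¹ *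
            (Cρ ^ (q/p) * (ENNReal.ofReal ((ρ^2 : ℝ) ^ (1 - α*q)) * KT)) := by
            apply mul_le_mul_right
            apply mul_le_mul_right
            apply mul_le_mul_left
            apply ENNReal.ofReal_le_ofReal
            exact Real.rpow_le_rpow (le_min (by positivity) zero_le_one) (min_le_left _ _)
              (by linarith [hαq1])
        _ = ENNReal.ofReal ((ρ^2 : ℝ) ^ (1 - α*q)) * (ENNReal.ofReal (ρ ^ 2))⁻¹ *
            (Cρ ^ (q/p) * KT) := by ring
        _ = ENNReal.ofReal ((ρ^2 : ℝ) ^ (-(α*q))) * (Cρ ^ (q/p) * KT) := by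
            congr 1
            have hρ2 : (0:ℝ) < ρ^2 := by positivity
            have : ENNReal.ofReal (ρ^2) = ENNReal.ofReal ((ρ^2:ℝ) ^ (1:ℝ)) := by
              rw [Real.rpow_one]
            rw [this, show (1:ℝ) - α*q = -(α*q) + 1 by ring]
            exact ofReal_rpow_cancel hρ2 _ _
    calc ((ENNReal.ofReal (ρ ^ 2))⁻¹ *
        ∫⁻ t in Ico t₀ (t₀ + ρ^2),
          ((volume (ball x₀ ρ))⁻¹ * (∫⁻ x in ball x₀ ρ, ENNReal.ofReal ‖b t x‖ ^ p)) ^ (q/p)) ^ (1/q)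
        ≤ (ENNReal.ofReal ((ρ^2 : ℝ) ^ (-(α*q))) * (Cρ ^ (q/p) * KT)) ^ (1/q) :=
          ENNReal.rpow_le_rpow h1 (by positivity)
      _ = ENNReal.ofReal ((ρ^2 : ℝ) ^ (-(α*q))) ^ (1/q) * (Cρ ^ (q/p)) ^ (1/q) * KT ^ (1/q) := by
          rw [ENNReal.mul_rpow_of_nonneg _ _ (by positivity),
            ENNReal.mul_rpow_of_nonneg _ _ (by positivity), mul_assoc]
      _ = ENNReal.ofReal (ρ ^ (-(2*α))) * (ENNReal.ofReal (ρ ^ (-β)) * K₄ ^ (1/p)) * KT ^ (1/q) := by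
          congr 1
          congr 1
          · rw [ENNReal.ofReal_rpow_of_pos (by positivity)]
            congr 1
            rw [← Real.rpow_natCast ρ 2, ← Real.rpow_mul hρ.le, ← Real.rpow_mul hρ.le]
            congr 1
            push_cast
            field_simp [hαq]
          · rw [← ENNReal.rpow_mul]
            have : q/p * (1/q) = 1/p := by field_simp
            rw [this, hCρ, ENNReal.mul_rpow_of_nonneg _ _ (by positivity)]
            congr 1
            rw [ENNReal.ofReal_rpow_of_pos (by positivity)]
            congr 1
            rw [← Real.rpow_mul hρ.le]
            congr 1
            field_simp [hβp]
      _ = ENNReal.ofReal (ρ ^ (-(2*α))) * ENNReal.ofReal (ρ ^ (-β)) * (K₄ ^ (1/p) * KT ^ (1/q)) := by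
          ring
  calc ENNReal.ofReal (ρ ^ (1 + α)) * avgMixedNorm d p q ρ t₀ x₀ b
      ≤ ENNReal.ofReal (ρ ^ (1 + α)) *
        (ENNReal.ofReal (ρ ^ (-(2*α))) * ENNReal.ofReal (ρ ^ (-β)) * (K₄ ^ (1/p) * KT ^ (1/q))) :=
        mul_le_mul_right hfinal _
    _ = ENNReal.ofReal (ρ ^ (1 + α) * ρ ^ (-(2*α)) * ρ ^ (-β)) * (K₄ ^ (1/p) * KT ^ (1/q)) := by
        rw [ENNReal.ofReal_mul (by positivity), ENNReal.ofReal_mul (by positivity)]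
        ring
    _ = K₄ ^ (1/p) * KT ^ (1/q) := by
        rw [← Real.rpow_add hρ, ← Real.rpow_add hρ]
        rw [show 1 + α + -(2*α) + -β = 1 - α - β by ring, show (1:ℝ) - α - β = 0 by linarith,
          Real.rpow_zero, ENNReal.ofReal_one, one_mul]

end
end

section
/- Let 0 < α ≤ β < 1, α + β = 1, d < p < d+1 and q defined by d/p + 2/q = 1 (so q > 2p). Define f(t,x) = 1_{0<t<1,|x|<1} t^{-α}|x|^{-β}. Then for every r ∈ (0,1] the time integral ∫_0^{r²} ( ∫_{|x|≤r} f(t,x)^p dx )^{q/p} dt diverges. -/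
set_option autoImplicit false

open MeasureTheory Metric Set ENNReal
noncomputable section

/-- let `0 < α ≤ β < 1`, `α + β = 1`, `d < p < d+1` and `q` be defined
by `d/p + 2/q = 1` (so `q > 2p`). With `f(t,x) = 1_{0<t<1,|x|<1} t^{-α}|x|^{-β}`, the
mixed-norm time integral `∫_0^{r²}(∫_{|x|≤r} f(t,x)^p dx)^{q/p} dt` diverges for every
`r ∈ (0,1]`; i.e. `f` fails the Ladyzhenskaya–Prodi–Serrin condition for this `(p,q)`. -/
theorem stmt11 (d : ℕ) (hd : 1 ≤ d) (α β : ℝ) (hα : 0 < α) (hαβ : α ≤ β) (hβ : β < 1)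
    (hsum : α + β = 1) (p q : ℝ) (hp1 : (d : ℝ) < p) (hp2 : p < (d : ℝ) + 1)
    (hq : (d : ℝ) / p + 2 / q = 1)
    (f : ℝ → EuclideanSpace ℝ (Fin d) → ℝ)
    (hf : ∀ t x, f t x =
      if 0 < t ∧ t < 1 ∧ 0 < ‖x‖ ∧ ‖x‖ < 1 then t ^ (-α) * ‖x‖ ^ (-β)
      else 0) :
    ∀ r : ℝ, 0 < r → r ≤ 1 →
      ∫⁻ t in Ioc (0 : ℝ) (r ^ 2),
        (∫⁻ x in closedBall (0 : EuclideanSpace ℝ (Fin d)) r,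
          ENNReal.ofReal (f t x ^ p)) ^ (q / p) = ⊤ := by
  intro r hr0 hr1
  have hd0 : (0:ℝ) < (d:ℝ) := by exact_mod_cast Nat.lt_of_lt_of_le Nat.zero_lt_one hd
  have hp0 : (0:ℝ) < p := hd0.trans hp1
  have hp0' : p ≠ 0 := ne_of_gt hp0
  have hdp : (d:ℝ)/p < 1 := (div_lt_one hp0).2 hp1
  have h2q : 0 < 2/q := by linarith
  have hq0 : 0 < q := by
    by_contra h
    push_neg at h
    have : 2/q ≤ 0 := div_nonpos_of_nonneg_of_nonpos (by norm_num) h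
    linarith
  have hq0' : q ≠ 0 := ne_of_gt hq0
  have hqp : 0 ≤ q / p := le_of_lt (div_pos hq0 hp0)
  have h1 : (d:ℝ)*q = p*q - 2*p := by
    field_simp at hq
    linarith
  set e : ℝ := ((-α - β/2)*p + (d:ℝ)/2) * (q/p) with he_def
  have he : e = -(α*q)/2 - 1 := by
    have h2 : (d:ℝ)/2 * (q/p) = q/2 - 1 := by
      rw [div_mul_div_comm, h1]
      field_simp
    have h3 : ((-α - β/2) * p) * (q/p) = (-α - β/2) * q := by
      field_simp
    have hβ' : β = 1 - α := by linarith
    rw [he_def, add_mul, h2, h3, hβ']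
    ring
  have heneg : e < -1 := by nlinarith [mul_pos hα hq0]
  -- notation
  have hV1pos : 0 < volume (ball (0:EuclideanSpace ℝ (Fin d)) 1) := measure_ball_pos _ _ one_pos
  have hV1lt : volume (ball (0:EuclideanSpace ℝ (Fin d)) 1) < ⊤ := measure_ball_lt_top
  set V1 := volume (ball (0:EuclideanSpace ℝ (Fin d)) 1) with hV1def
  set C := V1 ^ (q/p) with hCdef
  have hC0 : C ≠ 0 := (ENNReal.rpow_pos hV1pos hV1lt.ne).ne'
  have hCt : C ≠ ⊤ := ENNReal.rpow_ne_top_of_nonneg hqp hV1lt.ne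
  have hR0 : (0:ℝ) < r^2 := by positivity
  have hR1 : r^2 ≤ 1 := by nlinarith
  -- switch to Ioo
  rw [← setLIntegral_congr (Ioo_ae_eq_Ioc (a := (0:ℝ)) (b := r^2))]
  -- pointwise lower bound
  have key : ∀ t ∈ Ioo (0:ℝ) (r^2),
      ENNReal.ofReal (t ^ e) * C ≤
        (∫⁻ x in closedBall (0:EuclideanSpace ℝ (Fin d)) r, ENNReal.ofReal (f t x ^ p)) ^ (q/p) := by
    intro t ht
    obtain ⟨ht0, htR⟩ := ht
    have ht1 : t < 1 := lt_of_lt_of_le htR hR1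
    have hst0 : 0 < Real.sqrt t := Real.sqrt_pos.2 ht0
    have hstr : Real.sqrt t ≤ r := by
      rw [show r = Real.sqrt (r^2) from (Real.sqrt_sq hr0.le).symm]
      exact Real.sqrt_le_sqrt htR.le
    have hst1 : Real.sqrt t < 1 := by
      rw [show (1:ℝ) = Real.sqrt 1 from Real.sqrt_one.symm]
      exact Real.sqrt_lt_sqrt ht0.le ht1
    -- lower bound on the small ball
    have hstep : ENNReal.ofReal (t ^ ((-α - β/2)*p)) * volume (closedBall (0:EuclideanSpace ℝ (Fin d)) (Real.sqrt t))
        ≤ ∫⁻ x in closedBall (0:EuclideanSpace ℝ (Fin d)) (Real.sqrt t), ENNReal.ofReal (f t x ^ p) := by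
      rw [← setLIntegral_const]
      refine lintegral_mono_ae ?_
      have hz : volume ({(0:EuclideanSpace ℝ (Fin d))} : Set (EuclideanSpace ℝ (Fin d))) = 0 := by
        rw [← Metric.closedBall_zero (x := (0:EuclideanSpace ℝ (Fin d))), Measure.addHaar_closedBall _ _ le_rfl,
          finrank_euclideanSpace_fin, zero_pow (by omega), ENNReal.ofReal_zero, zero_mul]
      have h0 : ∀ᵐ x : EuclideanSpace ℝ (Fin d) ∂(volume.restrict (closedBall (0:EuclideanSpace ℝ (Fin d)) (Real.sqrt t))), x ≠ 0 := by
        refine ae_restrict_of_ae ?_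
        rw [ae_iff]
        simpa using hz
      filter_upwards [h0, ae_restrict_mem measurableSet_closedBall] with x hx0 hxB
      have hxn : 0 < ‖x‖ := norm_pos_iff.2 hx0
      have hxle : ‖x‖ ≤ Real.sqrt t := mem_closedBall_zero_iff.1 hxB
      have hx1 : ‖x‖ < 1 := lt_of_le_of_lt hxle hst1
      rw [hf, if_pos ⟨ht0, ht1, hxn, hx1⟩]
      apply ENNReal.ofReal_le_ofReal
      have hmul : (t ^ (-α) * ‖x‖ ^ (-β)) ^ p = t ^ (-α*p) * ‖x‖ ^ (-β*p) := by
        rw [Real.mul_rpow (Real.rpow_nonneg ht0.le _) (Real.rpow_nonneg hxn.le _),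
          ← Real.rpow_mul ht0.le, ← Real.rpow_mul hxn.le]
      rw [hmul]
      have h2' : Real.sqrt t ^ (-β*p) ≤ ‖x‖ ^ (-β*p) :=
        Real.rpow_le_rpow_of_nonpos hxn hxle (by nlinarith)
      have h3' : Real.sqrt t ^ (-β*p) = t ^ ((-β/2)*p) := by
        rw [Real.sqrt_eq_rpow, ← Real.rpow_mul ht0.le]
        ring_nf
      calc t ^ ((-α - β/2)*p) = t ^ (-α*p) * t ^ ((-β/2)*p) := by
            rw [← Real.rpow_add ht0]; ring_nf
        _ ≤ t ^ (-α*p) * ‖x‖ ^ (-β*p) := by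
            rw [← h3']
            exact mul_le_mul_of_nonneg_left h2' (Real.rpow_nonneg ht0.le _)
    have hvol : volume (closedBall (0:EuclideanSpace ℝ (Fin d)) (Real.sqrt t)) = ENNReal.ofReal (t ^ ((d:ℝ)/2)) * V1 := by
      rw [Measure.addHaar_closedBall _ _ hst0.le, finrank_euclideanSpace_fin]
      congr 2
      rw [← Real.rpow_natCast (Real.sqrt t) d, Real.sqrt_eq_rpow, ← Real.rpow_mul ht0.le]
      ring_nf
    have hinner : ENNReal.ofReal (t ^ ((-α - β/2)*p + (d:ℝ)/2)) * V1 ≤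
        ∫⁻ x in closedBall (0:EuclideanSpace ℝ (Fin d)) r, ENNReal.ofReal (f t x ^ p) := by
      rw [Real.rpow_add ht0, ENNReal.ofReal_mul (Real.rpow_nonneg ht0.le _), mul_assoc, ← hvol]
      exact le_trans hstep (lintegral_mono_set (closedBall_subset_closedBall hstr))
    calc ENNReal.ofReal (t ^ e) * C
        = (ENNReal.ofReal (t ^ ((-α - β/2)*p + (d:ℝ)/2)) * V1) ^ (q/p) := by
          rw [ENNReal.mul_rpow_of_nonneg _ _ hqp,
            ENNReal.ofReal_rpow_of_pos (Real.rpow_pos_of_pos ht0 _),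
            ← Real.rpow_mul ht0.le, he_def, hCdef]
      _ ≤ (∫⁻ x in closedBall (0:EuclideanSpace ℝ (Fin d)) r, ENNReal.ofReal (f t x ^ p)) ^ (q/p) :=
          ENNReal.rpow_le_rpow hinner hqp
  rw [eq_top_iff]
  refine le_trans ?_ (setLIntegral_mono' measurableSet_Ioo key)
  rw [lintegral_mul_const' C _ hCt]
  have hdiv : ∫⁻ t in Ioo (0:ℝ) (r^2), ENNReal.ofReal (t ^ e) = ⊤ := by
    by_contra hfin
    have hint : IntegrableOn (fun t : ℝ => t ^ e) (Ioo (0:ℝ) (r^2)) := by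
      constructor
      · refine ContinuousOn.aestronglyMeasurable ?_ measurableSet_Ioo
        exact fun t ht =>
          (Real.continuousAt_rpow_const t e (Or.inl (ne_of_gt ht.1))).continuousWithinAt
      · rw [hasFiniteIntegral_iff_ofReal ?_]
        · exact lt_top_iff_ne_top.2 hfin
        · filter_upwards [ae_restrict_mem measurableSet_Ioo] with t ht
          exact Real.rpow_nonneg ht.1.le _
    rw [intervalIntegral.integrableOn_Ioo_rpow_iff hR0] at hint
    linarith
  rw [hdiv, ENNReal.top_mul hC0]

end
end
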